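/- If A is an abelian group with Hom_ℤ(A, ℤ) = 0 and Ext¹_ℤ(A, ℤ) = 0, then A is divisible by every prime: for every prime p and every a ∈ A there exists b ∈ A with p·b = a. -/

import Mathlib

/-!
The short exact sequence `0 → ℤ → ℤ → ℤ/p → 0` (multiplication by `p`, then reduction) gives an
exact sequence `Hom(A, ℤ) → Hom(A, ℤ/p) → Ext¹(A, ℤ)`. With both outer terms zero,
`Hom(A/pA, ℤ/p) = Hom(A, ℤ/p) = 0`, and since `A/pA` is an `𝔽_p`-vector space, `A = pA`.

The exactness at `Hom(A, ℤ/p)` is checked on a projective resolution `P → A`: lifting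
`P₀ → A → ℤ/p` to `g₀ : P₀ → ℤ`, the composite `P₁ → P₀ → ℤ` lands in `pℤ` and so defines a
1-cocycle with values in `ℤ`; as `Ext¹(A, ℤ) = 0` it is a coboundary, and correcting `g₀` by it
gives a map vanishing on the image of `P₁`, hence factoring through `A`.
-/

open CategoryTheory Limits

section

variable {R : Type*} [Ring R] {C : Type*} [Category* C] [Abelian C] [Linear R C]
  [EnoughProjectives C]

lemma CategoryTheory.ProjectiveResolution.exists_d_comp_eq_of_isZero_ext_one {X Y : C}
    (P : ProjectiveResolution X) (hExt : IsZero (((Ext R C 1).obj (Opposite.op X)).obj Y))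
    (h : P.complex.X 1 ⟶ Y) (hh : P.complex.d 2 1 ≫ h = 0) :
    ∃ e : P.complex.X 0 ⟶ Y, P.complex.d 1 0 ≫ e = h := by
  have hexact : ((P.complex.linearYonedaObj R Y).sc' 0 1 2).Exact := by
    rw [← HomologicalComplex.exactAt_iff' _ 0 1 2 (by simp) (by simp),
      HomologicalComplex.exactAt_iff_isZero_homology]
    exact hExt.of_iso (P.isoExt 1 Y).symm
  exact (ShortComplex.moduleCat_exact_iff _).1 hexact h hh

lemma CategoryTheory.ShortComplex.ShortExact.exists_comp_g_eq_of_isZero_ext_one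
    {S : ShortComplex C} (hS : S.ShortExact) {X : C}
    (hExt : IsZero (((Ext R C 1).obj (Opposite.op X)).obj S.X₁)) (f : X ⟶ S.X₃) :
    ∃ g : X ⟶ S.X₂, g ≫ S.g = f := by
  have := hS.mono_f
  have := hS.epi_g
  let P := ProjectiveResolution.of X
  let σ : P.complex.X 0 ⟶ X := P.π.f 0
  have hdσ : P.complex.d 1 0 ≫ σ = 0 := P.complex_d_comp_π_f_zero
  have hσ : (ShortComplex.mk _ _ hdσ).Exact := P.exact₀
  have : Epi σ := inferInstanceAs (Epi (P.π.f 0))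
  let g₀ : P.complex.X 0 ⟶ S.X₂ := Projective.factorThru (σ ≫ f) S.g
  have hg₀ : g₀ ≫ S.g = σ ≫ f := Projective.factorThru_comp _ _
  have hd₀ : (P.complex.d 1 0 ≫ g₀) ≫ S.g = 0 := by
    rw [Category.assoc, hg₀, ← Category.assoc, hdσ, zero_comp]
  -- `h` is the 1-cocycle representing the image of `f` under the connecting map
  let h := hS.exact.lift _ hd₀
  have hh : P.complex.d 2 1 ≫ h = 0 := by
    rw [← cancel_mono S.f, Category.assoc, hS.exact.lift_f, P.complex.d_comp_d_assoc, zero_comp,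
      zero_comp]
  obtain ⟨e, he⟩ := P.exists_d_comp_eq_of_isZero_ext_one hExt h hh
  have hdesc : P.complex.d 1 0 ≫ (g₀ - e ≫ S.f) = 0 := by
    rw [Preadditive.comp_sub, reassoc_of% he, hS.exact.lift_f, sub_self]
  refine ⟨hσ.desc _ hdesc, ?_⟩
  rw [← cancel_epi σ, ← Category.assoc, hσ.g_desc, Preadditive.sub_comp, hg₀,
    Category.assoc, S.zero, comp_zero, sub_zero]

end

noncomputable def ModuleCat.intZModShortComplex (n : ℕ) : ShortComplex (ModuleCat ℤ) :=
  ShortComplex.mk (ModuleCat.ofHom (LinearMap.mulLeft ℤ (n : ℤ)))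
    (ModuleCat.ofHom (Int.castAddHom (ZMod n)).toIntLinearMap) (by ext; simp)

lemma ModuleCat.intZModShortComplex_shortExact {n : ℕ} (hn : n ≠ 0) :
    (ModuleCat.intZModShortComplex n).ShortExact := by
  refine .mk' ?_ ?_ ?_
  · rw [ShortComplex.moduleCat_exact_iff]
    intro x hx
    obtain ⟨y, rfl⟩ := (ZMod.intCast_zmod_eq_zero_iff_dvd x n).1 hx
    exact ⟨y, rfl⟩
  · rw [ModuleCat.mono_iff_injective]
    exact (mul_right_injective₀ (Int.natCast_ne_zero.2 hn) : Function.Injective ((n : ℤ) * ·))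
  · rw [ModuleCat.epi_iff_surjective]
    exact ZMod.intCast_surjective

lemma AddMonoidHom.exists_intCast_comp_eq_of_isZero_ext {A : Type} [AddCommGroup A]
    (hExt : IsZero (((Ext ℤ (ModuleCat ℤ) 1).obj (Opposite.op (ModuleCat.of ℤ A))).obj
      (ModuleCat.of ℤ ℤ)))
    {n : ℕ} (hn : n ≠ 0) (f : A →+ ZMod n) :
    ∃ g : A →+ ℤ, (Int.castAddHom (ZMod n)).comp g = f := by
  obtain ⟨g, hg⟩ := (ModuleCat.intZModShortComplex_shortExact hn).exists_comp_g_eq_of_isZero_ext_one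
    hExt (ModuleCat.ofHom f.toIntLinearMap)
  exact ⟨g.hom.toAddMonoidHom, AddMonoidHom.ext fun x => congr($hg x)⟩

lemma exists_nsmul_eq_of_forall_addMonoidHom_zmod_eq_zero {p : ℕ} [Fact p.Prime] {A : Type*}
    [AddCommGroup A] (h : ∀ f : A →+ ZMod p, f = 0) (a : A) : ∃ b : A, p • b = a := by
  have ha : ModN.mkQ p a = 0 := by
    refine (Module.forall_dual_apply_eq_zero_iff (ZMod p) _).1 fun φ => ?_
    exact DFunLike.congr_fun (h (φ.toAddMonoidHom.comp (ModN.mkQ p))) a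
  obtain ⟨b, hb⟩ := (Submodule.Quotient.mk_eq_zero _).1 ha
  exact ⟨b, by simpa [natCast_zsmul] using hb⟩

/-- If `A` is an abelian group with `Hom_ℤ(A, ℤ) = 0` and `Ext¹_ℤ(A, ℤ) = 0`,
then `A` is divisible by every prime. -/
theorem divisible_of_hom_int_trivial_of_ext_int_trivial
    (A : Type) [AddCommGroup A]
    (hHom : ∀ f : A →+ ℤ, f = 0)
    (hExt : Subsingleton
      (((Ext ℤ (ModuleCat ℤ) 1).obj (Opposite.op (ModuleCat.of ℤ A))).obj (ModuleCat.of ℤ ℤ))) :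
    ∀ p : ℕ, p.Prime → ∀ a : A, ∃ b : A, p • b = a := by
  intro p hp a
  have := Fact.mk hp
  refine exists_nsmul_eq_of_forall_addMonoidHom_zmod_eq_zero (fun f => ?_) a
  obtain ⟨g, rfl⟩ := AddMonoidHom.exists_intCast_comp_eq_of_isZero_ext
    (ModuleCat.isZero_of_subsingleton _) hp.ne_zero f
  rw [hHom g, AddMonoidHom.comp_zero]
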